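/- Let 1 ≤ k ≤ 5. Let x, x′ ∈ H_k with ω(x,x′) = 0 and gcd(x,x′) = 1. Let v_1, …, v_4 ∈ H be such that v_j = a_j for 1 ≤ j ≤ k−1, each v_j for k ≤ j ≤ 4 is a primitive vector lying in H_{k+1} ∪ {a_1,a_2,a_3,a_4}, the family (x, v_1, v_2, v_3, v_4) is pairwise ω-orthogonal with gcd(x,v_1,v_2,v_3,v_4) = 1, and the six vectors x, x′, v_1, v_2, v_3, v_4 are ℚ-linearly independent. Then there exists a ℚ-basis B of the orthogonal complement {z ∈ ℚ^{2g} : ω(z,x) = ω(z,x′) = 0} such that: (a) a_1, b_1, …, a_{k−1}, b_{k−1} all belong to B, and every element of B either equals some b_j with 1 ≤ j ≤ k−1 or is a primitive integer vector lying in H_k ∪ {a_1,a_2,a_3,a_4}; and (b) every z ∈ B is ω-orthogonal to at least three of v_1, v_2, v_3, v_4. -/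

import Mathlib

/-!
Write `l = k - 1` and `C = H_k`. The form `ω` is nondegenerate on `C`, which contains `x`, `x'`
and the `v_i` with `i ≥ l`, while `v_i = a_i` for `i < l`. For every `i < 4` pick `z_i ⊥ x, x'`,
orthogonal to the `b_j` (`j < l`) and to the `v_m` with `m ≠ i`, but not to `v_i`: for `i < l`
take `z_i = b_i`; for `i ≥ l`, since `v_i` is not in the span of `x`, `x'` and the other `v_m`
lying in `C`, nondegeneracy on `C` produces such a `z_i` in `C`, which is rescaled to a primitive
integer vector. Then `(a_j)_{j<l}, (z_i)_i` is biorthogonal to `(b_j)_{j<l}, (v_i)_i`, so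
completing it by a basis of `⟨x, x'⟩^⊥ ∩ ⟨b_j, v_i⟩^⊥` made of primitive vectors gives a basis
of `⟨x, x'⟩^⊥`, every member of which is `ω`-orthogonal to all `v_m` but at most one.
-/

namespace Paper

/-- The standard symplectic form on `R^{2g}` with respect to the basis
`a_1, b_1, …, a_g, b_g` (coordinates `2i, 2i+1` for `a_{i+1}, b_{i+1}`). -/
def symp {R : Type*} [CommRing R] {g : ℕ} (x y : Fin (2 * g) → R) : R :=
  ∑ i : Fin g,
    (x ⟨2 * i.1, by omega⟩ * y ⟨2 * i.1 + 1, by omega⟩ -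
      x ⟨2 * i.1 + 1, by omega⟩ * y ⟨2 * i.1, by omega⟩)

theorem symp_add_left {R : Type*} [CommRing R] {g : ℕ} (x y a : Fin (2 * g) → R) :
    symp (x + y) a = symp x a + symp y a := by
  unfold symp
  rw [← Finset.sum_add_distrib]
  exact Finset.sum_congr rfl fun i _ => by simp only [Pi.add_apply]; ring

theorem symp_smul_left {R : Type*} [CommRing R] {g : ℕ} (c : R) (x a : Fin (2 * g) → R) :
    symp (c • x) a = c * symp x a := by
  unfold symp
  rw [Finset.mul_sum]
  exact Finset.sum_congr rfl fun i _ => by simp only [Pi.smul_apply, smul_eq_mul]; ring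

theorem symp_zero_left {R : Type*} [CommRing R] {g : ℕ} (a : Fin (2 * g) → R) :
    symp (0 : Fin (2 * g) → R) a = 0 := by
  unfold symp; simp

/-- The orthogonal complement `A^⊥ = {x | ω(x,a) = 0 for all a ∈ A}`. -/
def perp {R : Type*} [CommRing R] {g : ℕ} (A : Set (Fin (2 * g) → R)) :
    Submodule R (Fin (2 * g) → R) where
  carrier := {x | ∀ a ∈ A, symp x a = 0}
  add_mem' := by
    intro x y hx hy a ha
    rw [symp_add_left, hx a ha, hy a ha, add_zero]
  zero_mem' := by
    intro a ha
    exact symp_zero_left a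
  smul_mem' := by
    intro c x hx a ha
    rw [symp_smul_left, hx a ha, mul_zero]

/-- The submodule of vectors whose first `m` coordinates vanish.
`H_k = coordZero R (2*g) (2*(k-1))`, and `H₂ = coordZero R (2*(g+1)) 2`. -/
def coordZero (R : Type*) [CommRing R] (n m : ℕ) : Submodule R (Fin n → R) where
  carrier := {v | ∀ j : Fin n, (j : ℕ) < m → v j = 0}
  add_mem' := by
    intro x y hx hy j hj
    have h1 := hx j hj
    have h2 := hy j hj
    simp [Pi.add_apply, h1, h2]
  zero_mem' := by intro j hj; rfl
  smul_mem' := by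
    intro c x hx j hj
    have h1 := hx j hj
    simp [Pi.smul_apply, h1]

/-- The standard basis vector `a_{i+1}` (`i` is 0-indexed). -/
def stdA (R : Type*) [CommRing R] (g i : ℕ) : Fin (2 * g) → R :=
  fun j => if (j : ℕ) = 2 * i then 1 else 0

/-- The standard basis vector `b_{i+1}` (`i` is 0-indexed). -/
def stdB (R : Type*) [CommRing R] (g i : ℕ) : Fin (2 * g) → R :=
  fun j => if (j : ℕ) = 2 * i + 1 then 1 else 0

/-- Regard an integer vector as a rational vector. -/
def qcast {n : ℕ} (v : Fin n → ℤ) : Fin n → ℚ := fun j => (v j : ℚ)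

/-- The projection `pr₂` deleting the `a_1`- and `b_1`-coordinates. -/
def pr2 {R : Type*} [CommRing R] {n : ℕ} (v : Fin n → R) : Fin n → R :=
  fun j => if (j : ℕ) < 2 then 0 else v j

/-- `gcd(v_1, …, v_m) = 1`: the vectors are linearly independent and their
ℤ-span is a direct summand. -/
def IsUnimodular {n m : ℕ} (v : Fin m → Fin n → ℤ) : Prop :=
  LinearIndependent ℤ v ∧
    ∃ C : Submodule ℤ (Fin n → ℤ), IsCompl (Submodule.span ℤ (Set.range v)) C

/-- A primitive vector. -/
def Primitive {n : ℕ} (v : Fin n → ℤ) : Prop := IsUnimodular ![v]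

/-- The entries of `w` are pairwise `ω`-orthogonal. -/
def PairwiseOrth {g m : ℕ} (w : Fin m → Fin (2 * g) → ℤ) : Prop :=
  ∀ i j, i ≠ j → symp (w i) (w j) = 0

/-- `Λ³ W`: the span of all wedges of three vectors from `W` inside the
exterior algebra. -/
def wedge3 {g : ℕ} (W : Submodule ℚ (Fin (2 * g) → ℚ)) :
    Submodule ℚ (ExteriorAlgebra ℚ (Fin (2 * g) → ℚ)) :=
  Submodule.span ℚ {x | ∃ z₁ ∈ W, ∃ z₂ ∈ W, ∃ z₃ ∈ W,
    x = ExteriorAlgebra.ι ℚ z₁ * ExteriorAlgebra.ι ℚ z₂ * ExteriorAlgebra.ι ℚ z₃}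

/-- `u ∧ Λ² W`. -/
def uWedge2 {g : ℕ} (u : Fin (2 * g) → ℚ) (W : Submodule ℚ (Fin (2 * g) → ℚ)) :
    Submodule ℚ (ExteriorAlgebra ℚ (Fin (2 * g) → ℚ)) :=
  Submodule.span ℚ {x | ∃ z₁ ∈ W, ∃ z₂ ∈ W,
    x = ExteriorAlgebra.ι ℚ u * ExteriorAlgebra.ι ℚ z₁ * ExteriorAlgebra.ι ℚ z₂}

/-- `u ∧ u' ∧ W`. -/
def uuWedge1 {g : ℕ} (u u' : Fin (2 * g) → ℚ) (W : Submodule ℚ (Fin (2 * g) → ℚ)) :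
    Submodule ℚ (ExteriorAlgebra ℚ (Fin (2 * g) → ℚ)) :=
  Submodule.span ℚ {x | ∃ z ∈ W,
    x = ExteriorAlgebra.ι ℚ u * ExteriorAlgebra.ι ℚ u' * ExteriorAlgebra.ι ℚ z}

/-- The simplicial differential: on the summand indexed by `w` it sends `z` to
`Σ_j (-1)^j · z` placed in the summand indexed by `∂_j w`. -/
noncomputable def diff (g p : ℕ)
    (ξ : (Fin (p + 1) → Fin (2 * g) → ℤ) →₀ ExteriorAlgebra ℚ (Fin (2 * g) → ℚ)) :
    (Fin p → Fin (2 * g) → ℤ) →₀ ExteriorAlgebra ℚ (Fin (2 * g) → ℚ) :=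
  ξ.sum fun w z =>
    ∑ j : Fin (p + 1), ((-1 : ℚ) ^ (j : ℕ)) • Finsupp.single (fun i => w (j.succAbove i)) z

/-- The gcd of the determinants of all maximal square submatrices of the matrix
whose columns are the `v i`. -/
def vgcd {ι : Type*} [Fintype ι] {m : ℕ} (v : Fin m → ι → ℤ) : ℕ :=
  Finset.univ.gcd fun r : Fin m → ι => (Matrix.det (Matrix.of fun i j => v j (r i))).natAbs

theorem exists_mem_orthogonal_apply_ne_zero {K V : Type*} [Field K] [AddCommGroup V]
    [Module K V] [FiniteDimensional K V] {B : LinearMap.BilinForm K V} (hB : B.IsRefl)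
    {C : Submodule K V} (hC : (B.restrict C).Nondegenerate) {T : Submodule K V} (hTC : T ≤ C)
    {u : V} (huC : u ∈ C) (hu : u ∉ T) : ∃ e ∈ C, (∀ t ∈ T, B e t = 0) ∧ B e u ≠ 0 := by
  have hu' : (⟨u, huC⟩ : C) ∉ (B.restrict C).orthogonal
      ((B.restrict C).orthogonal (T.comap C.subtype)) := by
    rwa [LinearMap.BilinForm.orthogonal_orthogonal hC (fun x y => hB x y), Submodule.mem_comap]
  simp only [LinearMap.BilinForm.mem_orthogonal_iff, not_forall] at hu'
  obtain ⟨⟨e, heC⟩, he, hne⟩ := hu'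
  exact ⟨e, heC, fun t ht => hB _ _ (he ⟨t, hTC ht⟩ ht), hne⟩

section Biorthogonal

variable {K V ι κ : Type*} [Field K] [AddCommGroup V] [Module K V] [Fintype ι]
  {φ : ι → Module.Dual K V} {f : ι → V}

theorem apply_sum_smul_of_biorthogonal (hoff : ∀ i j, i ≠ j → φ i (f j) = 0) (c : ι → K)
    (i : ι) : φ i (∑ j, c j • f j) = c i * φ i (f i) := by
  rw [map_sum, Finset.sum_eq_single i (fun j _ hj => by rw [map_smul, hoff i j hj.symm, smul_zero])
    (fun h => absurd (Finset.mem_univ i) h), map_smul, smul_eq_mul]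

theorem linearIndependent_sum_elim_of_biorthogonal (hdiag : ∀ i, φ i (f i) ≠ 0)
    (hoff : ∀ i j, i ≠ j → φ i (f j) = 0) {h : κ → V} (hh : LinearIndependent K h)
    (hker : ∀ i t, φ i (h t) = 0) : LinearIndependent K (Sum.elim f h) := by
  have hc : ∀ c : ι → K, (∀ i, φ i (∑ j, c j • f j) = 0) → c = 0 := fun c hc =>
    funext fun i => by simpa [apply_sum_smul_of_biorthogonal hoff, hdiag i] using hc i
  refine .sum_type (Fintype.linearIndependent_iff.mpr fun c hsum i => ?_) hh ?_
  · exact congrFun (hc c fun i => by rw [hsum, map_zero]) i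
  · rw [Submodule.disjoint_def]
    intro z hzf hzh
    obtain ⟨c, rfl⟩ := (Submodule.mem_span_range_iff_exists_fun K).mp hzf
    have hker' : Submodule.span K (Set.range h) ≤ ⨅ i, LinearMap.ker (φ i) :=
      Submodule.span_le.mpr (Set.range_subset_iff.mpr fun t => Submodule.mem_iInf _ |>.mpr
        fun i => hker i t)
    rw [hc c fun i => (Submodule.mem_iInf _).mp (hker' hzh) i]
    simp

theorem span_sum_elim_of_biorthogonal (hdiag : ∀ i, φ i (f i) ≠ 0)
    (hoff : ∀ i j, i ≠ j → φ i (f j) = 0) {P : Submodule K V} (hfP : ∀ i, f i ∈ P) {h : κ → V}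
    (hspan : Submodule.span K (Set.range h) = P ⊓ ⨅ i, LinearMap.ker (φ i)) :
    Submodule.span K (Set.range (Sum.elim f h)) = P := by
  apply le_antisymm
  · rw [Submodule.span_le, Set.range_subset_iff]
    rintro (i | t)
    · exact hfP i
    · exact (hspan.le (Submodule.subset_span ⟨t, rfl⟩)).1
  · intro z hz
    set z₀ := ∑ i, (φ i z / φ i (f i)) • f i
    have hrest : z - z₀ ∈ Submodule.span K (Set.range h) := by
      rw [hspan]
      refine ⟨P.sub_mem hz (P.sum_mem fun i _ => P.smul_mem _ (hfP i)),
        (Submodule.mem_iInf _).mpr fun i => ?_⟩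
      rw [LinearMap.mem_ker, map_sub, apply_sum_smul_of_biorthogonal hoff,
        div_mul_cancel₀ _ (hdiag i), sub_self]
    rw [Set.Sum.elim_range, Submodule.span_union, ← add_sub_cancel z₀ z]
    refine Submodule.add_mem_sup (Submodule.sum_mem _ fun i _ =>
      Submodule.smul_mem _ _ (Submodule.subset_span ⟨i, rfl⟩)) hrest

end Biorthogonal

theorem card_sub_one_le_card_filter_of_forall_ne {α : Type*} [Fintype α] [DecidableEq α]
    {p : α → Prop} [DecidablePred p] (a : α) (h : ∀ b ≠ a, p b) :
    Fintype.card α - 1 ≤ (Finset.univ.filter p).card := by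
  rw [← Finset.card_univ, ← Finset.card_erase_of_mem (Finset.mem_univ a)]
  exact Finset.card_le_card fun b hb =>
    Finset.mem_filter.mpr ⟨Finset.mem_univ b, h b (Finset.ne_of_mem_erase hb)⟩

section Symplectic

variable {R : Type*} [CommRing R] {g : ℕ}

theorem symp_add_right (x y a : Fin (2 * g) → R) :
    symp a (x + y) = symp a x + symp a y := by
  unfold symp
  rw [← Finset.sum_add_distrib]
  exact Finset.sum_congr rfl fun i _ => by simp only [Pi.add_apply]; ring

theorem symp_smul_right (c : R) (x a : Fin (2 * g) → R) :
    symp a (c • x) = c * symp a x := by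
  unfold symp
  rw [Finset.mul_sum]
  exact Finset.sum_congr rfl fun i _ => by simp only [Pi.smul_apply, smul_eq_mul]; ring

theorem symp_self (x : Fin (2 * g) → R) : symp x x = 0 :=
  Finset.sum_eq_zero fun _ _ => by ring

theorem symp_comm (x y : Fin (2 * g) → R) : symp x y = -symp y x := by
  unfold symp
  rw [← Finset.sum_neg_distrib]
  exact Finset.sum_congr rfl fun i _ => by ring

variable (R g) in
def sympForm : LinearMap.BilinForm R (Fin (2 * g) → R) :=
  LinearMap.mk₂ R symp symp_add_left (fun c x y => symp_smul_left c x y)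
    (fun a x y => symp_add_right x y a) (fun c x y => symp_smul_right c y x)

@[simp]
theorem sympForm_apply (x y : Fin (2 * g) → R) : sympForm R g x y = symp x y := rfl

theorem sympForm_isRefl : (sympForm R g).IsRefl :=
  LinearMap.IsAlt.isRefl symp_self

theorem symp_stdA_right {i : ℕ} (hi : i < g) (z : Fin (2 * g) → R) :
    symp z (stdA R g i) = -z ⟨2 * i + 1, by omega⟩ := by
  unfold symp stdA
  rw [Finset.sum_eq_single (⟨i, hi⟩ : Fin g)]
  · simp
  · intro b _ hb
    have : (b : ℕ) ≠ i := fun h => hb (Fin.ext h)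
    dsimp only
    rw [if_neg (by omega), if_neg (by omega)]
    ring
  · simp

theorem symp_stdB_right {i : ℕ} (hi : i < g) (z : Fin (2 * g) → R) :
    symp z (stdB R g i) = z ⟨2 * i, by omega⟩ := by
  unfold symp stdB
  rw [Finset.sum_eq_single (⟨i, hi⟩ : Fin g)]
  · simp
  · intro b _ hb
    have : (b : ℕ) ≠ i := fun h => hb (Fin.ext h)
    dsimp only
    rw [if_neg (by omega), if_neg (by omega)]
    ring
  · simp

theorem stdA_mem_coordZero {i m : ℕ} (h : m ≤ 2 * i) : stdA R g i ∈ coordZero R (2 * g) m :=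
  fun _ hj => if_neg (by omega)

theorem stdB_mem_coordZero {i m : ℕ} (h : m ≤ 2 * i + 1) :
    stdB R g i ∈ coordZero R (2 * g) m :=
  fun _ hj => if_neg (by omega)

theorem stdA_self : stdA R g g = 0 :=
  funext fun _ => if_neg (by omega)

theorem apply_eq_zero_of_symp_stdA_of_symp_stdB {z : Fin (2 * g) → R} (p : Fin (2 * g))
    (hA : symp z (stdA R g (p / 2)) = 0) (hB : symp z (stdB R g (p / 2)) = 0) : z p = 0 := by
  have hp : (p : ℕ) / 2 < g := by omega
  rw [symp_stdA_right hp, neg_eq_zero] at hA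
  rw [symp_stdB_right hp] at hB
  rcases Nat.even_or_odd' (p : ℕ) with ⟨i, hi | hi⟩
  · convert hB using 2; ext; simp only; omega
  · convert hA using 2; ext; simp only; omega

theorem mem_coordZero_iff_symp {l : ℕ} (hl : l ≤ g) {z : Fin (2 * g) → R} :
    z ∈ coordZero R (2 * g) (2 * l) ↔
      ∀ j < l, symp z (stdA R g j) = 0 ∧ symp z (stdB R g j) = 0 := by
  refine ⟨fun hz j hj => ?_, fun h p hp => ?_⟩
  · rw [symp_stdA_right (by omega), symp_stdB_right (by omega), hz _ (by simp only; omega),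
      hz _ (by simp only; omega), neg_zero]
    exact ⟨rfl, rfl⟩
  · exact apply_eq_zero_of_symp_stdA_of_symp_stdB p (h _ (by omega)).1 (h _ (by omega)).2

theorem symp_eq_zero_of_mem_coordZero {l : ℕ} (hl : l ≤ g) {z : Fin (2 * g) → R}
    (hz : z ∈ coordZero R (2 * g) (2 * l)) {j : ℕ} (hj : j < l) :
    symp z (stdA R g j) = 0 ∧ symp z (stdB R g j) = 0 ∧
      symp (stdA R g j) z = 0 ∧ symp (stdB R g j) z = 0 := by
  obtain ⟨hA, hB⟩ := (mem_coordZero_iff_symp hl).mp hz j hj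
  rw [symp_comm (stdA R g j), symp_comm (stdB R g j), hA, hB, neg_zero]
  exact ⟨rfl, rfl, rfl, rfl⟩

theorem sympForm_restrict_coordZero_nondegenerate {l : ℕ} :
    ((sympForm R g).restrict (coordZero R (2 * g) (2 * l))).Nondegenerate := by
  have hrefl : ((sympForm R g).restrict (coordZero R (2 * g) (2 * l))).IsRefl :=
    fun x y => sympForm_isRefl (x : Fin (2 * g) → R) y
  refine hrefl.nondegenerate_iff_separatingLeft.mpr fun ⟨z, hz⟩ h => ?_
  ext p
  by_cases hp : (p : ℕ) < 2 * l
  · exact hz p hp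
  · exact apply_eq_zero_of_symp_stdA_of_symp_stdB p
      (h ⟨stdA R g (p / 2), stdA_mem_coordZero (by omega)⟩)
      (h ⟨stdB R g (p / 2), stdB_mem_coordZero (by omega)⟩)

end Symplectic

section Primitive

variable {n : ℕ}

theorem qcast_mem_coordZero_iff {m : ℕ} {w : Fin n → ℤ} :
    qcast w ∈ coordZero ℚ n m ↔ w ∈ coordZero ℤ n m :=
  forall₂_congr fun _ _ => Int.cast_eq_zero

theorem qcast_stdA (i : ℕ) : qcast (stdA ℤ g i) = stdA ℚ g i :=
  funext fun j => by simp only [qcast, stdA]; split <;> simp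

theorem primitive_of_apply_eq_one {y : Fin n → ℤ} (f : (Fin n → ℤ) →ₗ[ℤ] ℤ) (hf : f y = 1) :
    Primitive y := by
  have hy : y ≠ 0 := by rintro rfl; simp at hf
  refine ⟨linearIndependent_unique_iff.mpr hy, LinearMap.ker f, ?_, ?_⟩
  · rw [Submodule.disjoint_def]
    intro w hw hwf
    rw [Matrix.range_cons, Matrix.range_empty, Set.union_empty] at hw
    obtain ⟨c, rfl⟩ := Submodule.mem_span_singleton.mp hw
    rw [LinearMap.mem_ker, map_smul, hf, smul_eq_mul, mul_one] at hwf
    rw [hwf, zero_smul]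
  · rw [codisjoint_iff_le_sup]
    intro w _
    refine Submodule.mem_sup.mpr ⟨f w • y, Submodule.smul_mem _ _ (Submodule.subset_span ⟨0, rfl⟩),
      w - f w • y, ?_, add_sub_cancel _ _⟩
    rw [LinearMap.mem_ker, map_sub, map_smul, hf, smul_eq_mul, mul_one, sub_self]

theorem primitive_of_gcd_eq_one {y : Fin n → ℤ} (h : Finset.univ.gcd y = 1) : Primitive y := by
  obtain ⟨c, hc⟩ := Finset.gcd_eq_sum_mul Finset.univ y
  refine primitive_of_apply_eq_one (∑ i, c i • LinearMap.proj i) ?_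
  simp [← h, hc, mul_comm]

theorem primitive_stdA {g i : ℕ} (hi : i < g) : Primitive (stdA ℤ g i) :=
  primitive_of_apply_eq_one (LinearMap.proj ⟨2 * i, by omega⟩) (by simp [stdA])

theorem exists_primitive_qcast_eq_smul {u : Fin n → ℚ} (hu : u ≠ 0) :
    ∃ y : Fin n → ℤ, Primitive y ∧ ∃ q : ℚ, q ≠ 0 ∧ qcast y = q • u := by
  obtain ⟨b, hb⟩ := IsLocalization.exist_integer_multiples_of_finite (nonZeroDivisors ℤ) u
  choose w hw using hb
  obtain ⟨i, hi⟩ := Function.ne_iff.mp hu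
  obtain ⟨y, hwy, hy⟩ := Finset.extract_gcd w ⟨i, Finset.mem_univ i⟩
  set d := Finset.univ.gcd w
  have hdy : ∀ j, (d : ℚ) * y j = b * u j := fun j => by
    rw [← Int.cast_mul, ← hwy j (Finset.mem_univ j)]
    simpa using hw j
  have hb0 : ((b : ℤ) : ℚ) ≠ 0 := by exact_mod_cast nonZeroDivisors.coe_ne_zero b
  have hd0 : (d : ℚ) ≠ 0 := fun hd => hi (by simpa [hd, hb0] using hdy i)
  refine ⟨y, primitive_of_gcd_eq_one hy, (b : ℚ) / d, div_ne_zero hb0 hd0, funext fun j => ?_⟩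
  simp only [qcast, Pi.smul_apply, smul_eq_mul]
  field_simp
  linear_combination hdy j

theorem exists_primitive_basis (W : Submodule ℚ (Fin n → ℚ)) :
    ∃ (d : ℕ) (y : Fin d → Fin n → ℤ), (∀ t, Primitive (y t)) ∧
      LinearIndependent ℚ (fun t => qcast (y t)) ∧
      Submodule.span ℚ (Set.range fun t => qcast (y t)) = W := by
  let b := Module.finBasis ℚ W
  have : ∀ t, ∃ y, Primitive y ∧ ∃ q : ℚ, q ≠ 0 ∧ qcast y = q • (b t : Fin n → ℚ) := fun t =>
    exists_primitive_qcast_eq_smul (by simpa using b.ne_zero t)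
  choose y hy q hq hqy using this
  let b' := b.unitsSMul fun t => Units.mk0 (q t) (hq t)
  have hb' : (fun t => qcast (y t)) = W.subtype ∘ b' :=
    funext fun t => by simp [b', hqy, Module.Basis.unitsSMul_apply, Units.smul_def]
  refine ⟨_, y, hy, hb' ▸ b'.linearIndependent.map' _ W.ker_subtype, ?_⟩
  rw [hb', Set.range_comp, Submodule.span_image, b'.span_eq, Submodule.map_top,
    Submodule.range_subtype]

theorem exists_primitive_extension_of_biorthogonal {ι : Type*} [Fintype ι]
    {φ : ι → Module.Dual ℚ (Fin n → ℚ)} {f : ι → Fin n → ℚ} (hdiag : ∀ i, φ i (f i) ≠ 0)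
    (hoff : ∀ i j, i ≠ j → φ i (f j) = 0) {P : Submodule ℚ (Fin n → ℚ)} (hfP : ∀ i, f i ∈ P) :
    ∃ (d : ℕ) (y : Fin d → Fin n → ℤ), (∀ t, Primitive (y t)) ∧
      (∀ i t, φ i (qcast (y t)) = 0) ∧
      LinearIndependent ℚ (Sum.elim f fun t => qcast (y t)) ∧
      Submodule.span ℚ (Set.range (Sum.elim f fun t => qcast (y t))) = P := by
  obtain ⟨d, y, hy, hyli, hyspan⟩ :=
    exists_primitive_basis (P ⊓ ⨅ i, LinearMap.ker (φ i))
  have hyker : ∀ i t, φ i (qcast (y t)) = 0 := fun i t =>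
    (Submodule.mem_iInf _).mp (hyspan.le (Submodule.subset_span ⟨t, rfl⟩)).2 i
  exact ⟨d, y, hy, hyker, linearIndependent_sum_elim_of_biorthogonal hdiag hoff hyli hyker,
    span_sum_elim_of_biorthogonal hdiag hoff hfP hyspan⟩

end Primitive

section GoodBasis

variable {g l : ℕ} {x x' : Fin (2 * g) → ℚ} {v : Fin 4 → Fin (2 * g) → ℚ}

theorem le_of_linearIndependent_of_eq_stdA (hl4 : l ≤ 4)
    (hva : ∀ j : Fin 4, (j : ℕ) < l → v j = stdA ℚ g j)
    (hli : LinearIndependent ℚ (Matrix.vecCons x (Matrix.vecCons x' v))) : l ≤ g := by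
  by_contra! hgl
  have := hli.ne_zero (Fin.succ (Fin.succ ⟨g, by omega⟩))
  simp [hva ⟨g, by omega⟩ hgl, stdA_self] at this

theorem stdB_mem_perp_and_symp_eq_zero_iff (hlg : l ≤ g)
    (hxC : x ∈ coordZero ℚ (2 * g) (2 * l)) (hx'C : x' ∈ coordZero ℚ (2 * g) (2 * l))
    (hva : ∀ j : Fin 4, (j : ℕ) < l → v j = stdA ℚ g j)
    (hvC : ∀ j : Fin 4, l ≤ (j : ℕ) → v j ∈ coordZero ℚ (2 * g) (2 * l))
    {i : Fin 4} (hi : (i : ℕ) < l) :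
    stdB ℚ g i ∈ perp {x, x'} ∧ ∀ m, symp (stdB ℚ g i) (v m) = 0 ↔ m ≠ i := by
  refine ⟨?_, fun m => ?_⟩
  · rintro a (rfl | rfl)
    exacts [(symp_eq_zero_of_mem_coordZero hlg hxC hi).2.2.2,
      (symp_eq_zero_of_mem_coordZero hlg hx'C hi).2.2.2]
  rcases lt_or_ge (m : ℕ) l with hm | hm
  · rw [hva m hm, symp_stdA_right (by omega)]
    simp [stdB, Fin.ext_iff, eq_comm]
  · exact iff_of_true (symp_eq_zero_of_mem_coordZero hlg (hvC m hm) hi).2.2.2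
      (by rintro rfl; omega)

theorem exists_mem_coordZero_perp_symp_eq_zero_iff (hlg : l ≤ g)
    (hxC : x ∈ coordZero ℚ (2 * g) (2 * l))
    (hx'C : x' ∈ coordZero ℚ (2 * g) (2 * l))
    (hva : ∀ j : Fin 4, (j : ℕ) < l → v j = stdA ℚ g j)
    (hvC : ∀ j : Fin 4, l ≤ (j : ℕ) → v j ∈ coordZero ℚ (2 * g) (2 * l))
    (hli : LinearIndependent ℚ (Matrix.vecCons x (Matrix.vecCons x' v)))
    {i : Fin 4} (hi : l ≤ (i : ℕ)) :
    ∃ e ∈ coordZero ℚ (2 * g) (2 * l),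
      e ∈ perp {x, x'} ∧ ∀ m, symp e (v m) = 0 ↔ m ≠ i := by
  set s := Matrix.vecCons x (Matrix.vecCons x' v)
  set S := {p | p ≠ i.succ.succ ∧ s p ∈ coordZero ℚ (2 * g) (2 * l)}
  have hsS : ∀ p ∈ S, ∀ e, (∀ t ∈ Submodule.span ℚ (s '' S), symp e t = 0) → symp e (s p) = 0 :=
    fun p hp e he => he _ (Submodule.subset_span ⟨p, hp, rfl⟩)
  obtain ⟨e, heC, he, hei⟩ := exists_mem_orthogonal_apply_ne_zero sympForm_isRefl
    sympForm_restrict_coordZero_nondegenerate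
    (Submodule.span_le.mpr (Set.image_subset_iff.mpr fun p hp => hp.2)) (hvC i hi)
    (hli.notMem_span_image (x := i.succ.succ) (s := S) fun h => h.1 rfl)
  refine ⟨e, heC, ?_, fun m => ⟨fun h hmi => hei (hmi ▸ h), fun hmi => ?_⟩⟩
  · rintro a (rfl | rfl)
    exacts [hsS 0 ⟨(Fin.succ_ne_zero _).symm, hxC⟩ e he,
      hsS 1 ⟨fun h => Fin.succ_ne_zero i (Fin.succ_injective _ h.symm), hx'C⟩ e he]
  rcases lt_or_ge (m : ℕ) l with hm | hm
  · rw [hva m hm]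
    exact (symp_eq_zero_of_mem_coordZero hlg heC hm).1
  · exact hsS m.succ.succ ⟨by simpa using hmi, hvC m hm⟩ e he

theorem exists_perp_dual_vector (hlg : l ≤ g) (hxC : x ∈ coordZero ℚ (2 * g) (2 * l))
    (hx'C : x' ∈ coordZero ℚ (2 * g) (2 * l))
    (hva : ∀ j : Fin 4, (j : ℕ) < l → v j = stdA ℚ g j)
    (hvC : ∀ j : Fin 4, l ≤ (j : ℕ) → v j ∈ coordZero ℚ (2 * g) (2 * l))
    (hli : LinearIndependent ℚ (Matrix.vecCons x (Matrix.vecCons x' v))) (i : Fin 4) :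
    ∃ z, z ∈ perp {x, x'} ∧ (∀ j < l, symp z (stdB ℚ g j) = 0) ∧
      (∀ m, symp z (v m) = 0 ↔ m ≠ i) ∧ ((i : ℕ) < l → z = stdB ℚ g i) ∧
      (l ≤ (i : ℕ) → ∃ y, Primitive y ∧ y ∈ coordZero ℤ (2 * g) (2 * l) ∧ z = qcast y) := by
  rcases lt_or_ge (i : ℕ) l with hi | hi
  · obtain ⟨hP, hv⟩ := stdB_mem_perp_and_symp_eq_zero_iff hlg hxC hx'C hva hvC hi
    refine ⟨_, hP, fun j hj => ?_, hv, fun _ => rfl, fun h => absurd h (by omega)⟩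
    rw [symp_stdB_right (by omega), stdB, if_neg (by simp only; omega)]
  · obtain ⟨e, heC, heP, hev⟩ :=
      exists_mem_coordZero_perp_symp_eq_zero_iff hlg hxC hx'C hva hvC hli hi
    have he0 : e ≠ 0 := by rintro rfl; simpa [symp_zero_left] using hev i
    obtain ⟨y, hy, q, hq, hqy⟩ := exists_primitive_qcast_eq_smul he0
    have hyC : qcast y ∈ coordZero ℚ (2 * g) (2 * l) := hqy ▸ Submodule.smul_mem _ q heC
    refine ⟨qcast y, hqy ▸ (perp _).smul_mem q heP,
      fun j hj => (symp_eq_zero_of_mem_coordZero hlg hyC hj).2.1, fun m => ?_,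
      fun h => absurd h (by omega), fun _ => ⟨y, hy, qcast_mem_coordZero_iff.mp hyC, rfl⟩⟩
    rw [hqy, symp_smul_left, mul_eq_zero, or_iff_right hq, hev m]

theorem symp_sum_elim_eq_zero_iff (hlg : l ≤ g)
    (hva : ∀ j : Fin 4, (j : ℕ) < l → v j = stdA ℚ g j)
    (hvC : ∀ j : Fin 4, l ≤ (j : ℕ) → v j ∈ coordZero ℚ (2 * g) (2 * l))
    {z : Fin 4 → Fin (2 * g) → ℚ} (hzB : ∀ i, ∀ j < l, symp (z i) (stdB ℚ g j) = 0)
    (hzv : ∀ i m, symp (z i) (v m) = 0 ↔ m ≠ i) (a b : Fin l ⊕ Fin 4) :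
    symp (Sum.elim (fun j : Fin l => stdA ℚ g j) z b)
      (Sum.elim (fun j : Fin l => stdB ℚ g j) v a) = 0 ↔ a ≠ b := by
  rcases a with j | m <;> rcases b with j' | i
  · rw [Sum.elim_inl, Sum.elim_inl, symp_stdB_right (by omega)]
    simp [stdA, Fin.ext_iff, eq_comm]
  · exact iff_of_true (hzB i j j.2) Sum.inl_ne_inr
  · refine iff_of_true ?_ Sum.inr_ne_inl
    rcases lt_or_ge (m : ℕ) l with hm | hm
    · rw [Sum.elim_inr, hva m hm, Sum.elim_inl, symp_stdA_right (by omega), stdA,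
        if_neg (by simp only; omega), neg_zero]
    · exact (symp_eq_zero_of_mem_coordZero hlg (hvC m hm) j'.2).2.2.1
  · rw [Sum.elim_inr, Sum.elim_inr, hzv, ne_eq, ne_eq, Sum.inr.injEq]

theorem exists_good_basis (hl4 : l ≤ 4) (hxC : x ∈ coordZero ℚ (2 * g) (2 * l))
    (hx'C : x' ∈ coordZero ℚ (2 * g) (2 * l))
    (hva : ∀ j : Fin 4, (j : ℕ) < l → v j = stdA ℚ g j)
    (hvC : ∀ j : Fin 4, l ≤ (j : ℕ) → v j ∈ coordZero ℚ (2 * g) (2 * l))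
    (hli : LinearIndependent ℚ (Matrix.vecCons x (Matrix.vecCons x' v))) :
    ∃ B : Set (Fin (2 * g) → ℚ),
      LinearIndependent ℚ (fun z : B => (z : Fin (2 * g) → ℚ)) ∧
      Submodule.span ℚ B = perp {x, x'} ∧
      (∀ j : ℕ, j < l → stdA ℚ g j ∈ B ∧ stdB ℚ g j ∈ B) ∧
      (∀ z ∈ B, (∃ j : ℕ, j < l ∧ z = stdB ℚ g j) ∨
        ∃ y : Fin (2 * g) → ℤ, Primitive y ∧
          (y ∈ coordZero ℤ (2 * g) (2 * l) ∨ ∃ i < 4, y = stdA ℤ g i) ∧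
          z = qcast y) ∧
      ∀ z ∈ B, 3 ≤ (Finset.univ.filter fun j : Fin 4 => symp z (v j) = 0).card := by
  have hlg := le_of_linearIndependent_of_eq_stdA hl4 hva hli
  choose z hzP hzB hzv hzlt hzge using exists_perp_dual_vector hlg hxC hx'C hva hvC hli
  set f := Sum.elim (fun j : Fin l => stdA ℚ g j) z
  set w := Sum.elim (fun j : Fin l => stdB ℚ g j) v
  have hfw := symp_sum_elim_eq_zero_iff hlg hva hvC hzB hzv
  set φ : Fin l ⊕ Fin 4 → Module.Dual ℚ (Fin (2 * g) → ℚ) := fun a => (sympForm ℚ g).flip (w a)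
  have hfP : ∀ a, f a ∈ perp {x, x'} := by
    rintro (j | i)
    · rintro _ (rfl | rfl)
      exacts [(symp_eq_zero_of_mem_coordZero hlg hxC j.2).2.2.1,
        (symp_eq_zero_of_mem_coordZero hlg hx'C j.2).2.2.1]
    · exact hzP i
  obtain ⟨d, y, hy, hyw, hFli, hFspan⟩ := exists_primitive_extension_of_biorthogonal (φ := φ)
    (fun a => (hfw a a).not.mpr (not_not.mpr rfl)) (fun a b h => (hfw a b).mpr h) hfP
  refine ⟨Set.range (Sum.elim f fun t => qcast (y t)), hFli.linearIndepOn_id, hFspan,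
    fun j hj => ⟨⟨.inl (.inl ⟨j, hj⟩), rfl⟩, ⟨.inl (.inr ⟨j, by omega⟩), hzlt _ hj⟩⟩, ?_, ?_⟩
  · rintro _ ⟨(j | i) | t, rfl⟩
    · exact .inr ⟨_, primitive_stdA (by omega), .inr ⟨j, by omega, rfl⟩, (qcast_stdA _).symm⟩
    · rcases lt_or_ge (i : ℕ) l with hi | hi
      · exact .inl ⟨i, hi, hzlt i hi⟩
      · obtain ⟨y, hy, hyC, hzy⟩ := hzge i hi
        exact .inr ⟨y, hy, .inl hyC, hzy⟩
    · refine .inr ⟨y t, hy t, .inl (qcast_mem_coordZero_iff.mp ?_), rfl⟩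
      refine (mem_coordZero_iff_symp hlg).mpr fun j hj => ⟨?_, hyw (.inl ⟨j, hj⟩) t⟩
      simpa [φ, w, hva ⟨j, by omega⟩ hj] using hyw (.inr ⟨j, by omega⟩) t
  · rintro _ ⟨(a | t), rfl⟩
    · refine card_sub_one_le_card_filter_of_forall_ne (a.elim (fun _ => 0) id) fun m hm => ?_
      exact (hfw (.inr m) a).mpr (by rcases a with j | i <;> simp_all)
    · exact card_sub_one_le_card_filter_of_forall_ne 0 fun m _ => hyw (.inr m) t

end GoodBasis

theorem mem_coordZero_of_eq_stdA {g l m : ℕ} {v : Fin 4 → Fin (2 * g) → ℤ}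
    (hinj : Function.Injective v) (hva : ∀ j : Fin 4, (j : ℕ) < l → v j = stdA ℤ g j)
    {j : Fin 4} (hj : l ≤ (j : ℕ)) (hm : 2 * l ≤ m)
    (h : v j ∈ coordZero ℤ (2 * g) m ∨ ∃ i < 4, v j = stdA ℤ g i) :
    v j ∈ coordZero ℤ (2 * g) (2 * l) := by
  rcases h with h | ⟨i, hi4, hi⟩
  · exact fun p hp => h p (by omega)
  · rw [hi]
    refine stdA_mem_coordZero ?_
    by_contra! hil
    have := congrArg Fin.val (hinj ((hva ⟨i, hi4⟩ (by simp only; omega)).trans hi.symm))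
    simp only at this
    omega

theorem stmt15_general (g k : ℕ) (hk5 : k ≤ 5)
    (x x' : Fin (2 * g) → ℤ)
    (hxH : x ∈ coordZero ℤ (2 * g) (2 * (k - 1)))
    (hx'H : x' ∈ coordZero ℤ (2 * g) (2 * (k - 1)))
    (v : Fin 4 → Fin (2 * g) → ℤ)
    (hva : ∀ j : Fin 4, (j : ℕ) < k - 1 → v j = stdA ℤ g (j : ℕ))
    (hvprim : ∀ j : Fin 4, k - 1 ≤ (j : ℕ) → Primitive (v j) ∧
      (v j ∈ coordZero ℤ (2 * g) (2 * k) ∨ ∃ i < 4, v j = stdA ℤ g i))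
    (hli : LinearIndependent ℚ
      ![qcast x, qcast x', qcast (v 0), qcast (v 1), qcast (v 2), qcast (v 3)]) :
    ∃ B : Set (Fin (2 * g) → ℚ),
      LinearIndependent ℚ (fun z : B => (z : Fin (2 * g) → ℚ)) ∧
      Submodule.span ℚ B = perp {qcast x, qcast x'} ∧
      (∀ j : ℕ, j < k - 1 → stdA ℚ g j ∈ B ∧ stdB ℚ g j ∈ B) ∧
      (∀ z ∈ B, (∃ j : ℕ, j < k - 1 ∧ z = stdB ℚ g j) ∨
        ∃ y : Fin (2 * g) → ℤ, Primitive y ∧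
          (y ∈ coordZero ℤ (2 * g) (2 * (k - 1)) ∨ ∃ i < 4, y = stdA ℤ g i) ∧
          z = qcast y) ∧
      ∀ z ∈ B, 3 ≤ (Finset.univ.filter fun j : Fin 4 => symp z (qcast (v j)) = 0).card := by
  have hli' : LinearIndependent ℚ
      (Matrix.vecCons (qcast x) (Matrix.vecCons (qcast x') fun j => qcast (v j))) := by
    convert hli using 1
    ext j : 1
    fin_cases j <;> rfl
  have hinj : Function.Injective v := fun i j h =>
    Fin.succ_injective _ <| Fin.succ_injective _ <| hli'.injective <| by simp [h]
  exact exists_good_basis (l := k - 1) (by omega) (qcast_mem_coordZero_iff.mpr hxH)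
    (qcast_mem_coordZero_iff.mpr hx'H) (fun j hj => by rw [hva j hj, qcast_stdA])
    (fun j hj => qcast_mem_coordZero_iff.mpr
      (mem_coordZero_of_eq_stdA hinj hva hj (by omega) (hvprim j hj).2)) hli'

/-- Lemma 3.15 — existence of a good basis of `⟨x,x'⟩^⊥`. -/
theorem stmt15 (g k : ℕ) (hk1 : 1 ≤ k) (hk5 : k ≤ 5)
    (x x' : Fin (2 * g) → ℤ)
    (hxH : x ∈ coordZero ℤ (2 * g) (2 * (k - 1)))
    (hx'H : x' ∈ coordZero ℤ (2 * g) (2 * (k - 1)))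
    (hxx' : symp x x' = 0)
    (hgcd2 : IsUnimodular ![x, x'])
    (v : Fin 4 → Fin (2 * g) → ℤ)
    (hva : ∀ j : Fin 4, (j : ℕ) < k - 1 → v j = stdA ℤ g (j : ℕ))
    (hvprim : ∀ j : Fin 4, k - 1 ≤ (j : ℕ) → Primitive (v j) ∧
      (v j ∈ coordZero ℤ (2 * g) (2 * k) ∨ ∃ i < 4, v j = stdA ℤ g i))
    (horth : ∀ i j, i ≠ j →
      symp (![x, v 0, v 1, v 2, v 3] i) (![x, v 0, v 1, v 2, v 3] j) = 0)
    (hgcd5 : IsUnimodular ![x, v 0, v 1, v 2, v 3])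
    (hli : LinearIndependent ℚ
      ![qcast x, qcast x', qcast (v 0), qcast (v 1), qcast (v 2), qcast (v 3)]) :
    ∃ B : Set (Fin (2 * g) → ℚ),
      LinearIndependent ℚ (fun z : B => (z : Fin (2 * g) → ℚ)) ∧
      Submodule.span ℚ B = perp {qcast x, qcast x'} ∧
      (∀ j : ℕ, j < k - 1 → stdA ℚ g j ∈ B ∧ stdB ℚ g j ∈ B) ∧
      (∀ z ∈ B, (∃ j : ℕ, j < k - 1 ∧ z = stdB ℚ g j) ∨
        ∃ y : Fin (2 * g) → ℤ, Primitive y ∧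
          (y ∈ coordZero ℤ (2 * g) (2 * (k - 1)) ∨ ∃ i < 4, y = stdA ℤ g i) ∧
          z = qcast y) ∧
      ∀ z ∈ B, 3 ≤ (Finset.univ.filter fun j : Fin 4 => symp z (qcast (v j)) = 0).card :=
  stmt15_general g k hk5 x x' hxH hx'H v hva hvprim hli

end Paper
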